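/- Let E ⊆ ℝⁿ be bounded open with vol(E) > 0, let α ∈ (0,1), let A ⊆ E be measurable with vol(A) ≥ (1 - α)·vol(E), and suppose A admits a finite measurable partition 𝓡_A of cardinality M with vol(R) ≥ ε and diam(R) ≤ δ for all R ∈ 𝓡_A. Then for i.i.d. uniform samples X₁,…,X_N from E, P( vol(B(𝕏, δ) ∩ E)/vol(E) ≥ 1 - α ) ≥ 1 - M·exp(-ε·N / vol(E)). -/

import Mathlib

/-!
Call a sample configuration good if every piece `R` of the partition contains a sample. Since
`diam R ≤ δ`, each piece then lies in the closed `δ`-ball around its sample, so the balls cover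
`A` and the covered part of `E` has volume at least `vol A ≥ (1 - α) vol E`. A fixed piece is
missed by one uniform sample with probability `1 - vol R / vol E ≤ exp (-ε / vol E)`, hence by
all `N` independent samples with probability at most `exp (-ε N / vol E)`; a union bound over the
`M` pieces bounds the probability of a bad configuration.
-/

open MeasureTheory Metric Set ProbabilityTheory
open scoped ENNReal

lemma ENNReal.one_sub_ofReal_le_ofReal_exp_neg (p : ℝ) :
    1 - ENNReal.ofReal p ≤ ENNReal.ofReal (Real.exp (-p)) := by
  rw [tsub_le_iff_right, ← ENNReal.ofReal_one]
  calc ENNReal.ofReal 1 ≤ ENNReal.ofReal (Real.exp (-p) + p) :=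
        ENNReal.ofReal_le_ofReal (by linarith [Real.add_one_le_exp (-p)])
    _ ≤ ENNReal.ofReal (Real.exp (-p)) + ENNReal.ofReal p := ENNReal.ofReal_add_le

lemma Metric.subset_closedBall_of_mem_of_diam_le {β : Type*} [PseudoMetricSpace β] {R : Set β}
    {x : β} {δ : ℝ} (hR : Bornology.IsBounded R) (hx : x ∈ R) (hdiam : diam R ≤ δ) :
    R ⊆ closedBall x δ := fun _ hy => (dist_le_diam_of_mem hR hy hx).trans hdiam

lemma Metric.sUnion_subset_iUnion_closedBall_of_diam_le {β ι : Type*} [PseudoMetricSpace β]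
    {𝓡 : Set (Set β)} {x : ι → β} {δ : ℝ} (hbdd : ∀ R ∈ 𝓡, Bornology.IsBounded R)
    (hdiam : ∀ R ∈ 𝓡, diam R ≤ δ) (hhit : ∀ R ∈ 𝓡, ∃ i, x i ∈ R) :
    ⋃₀ 𝓡 ⊆ ⋃ i, closedBall (x i) δ := by
  refine sUnion_subset fun R hR => ?_
  obtain ⟨i, hi⟩ := hhit R hR
  exact (subset_closedBall_of_mem_of_diam_le (hbdd R hR) hi (hdiam R hR)).trans
    (subset_iUnion (fun i => closedBall (x i) δ) i)

lemma MeasureTheory.measure_compl_inter_div_le_exp {β : Type*} [MeasurableSpace β]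
    {μ : Measure β} {E R : Set β} (hR : MeasurableSet R) (hRE : R ⊆ E) (hE0 : μ E ≠ 0)
    (hE : μ E ≠ ∞) {ε : ℝ} (hε : ENNReal.ofReal ε ≤ μ R) :
    μ (Rᶜ ∩ E) / μ E ≤ ENNReal.ofReal (Real.exp (-ε / (μ E).toReal)) := by
  have hεE : ENNReal.ofReal ε / μ E = ENNReal.ofReal (ε / (μ E).toReal) := by
    rw [ENNReal.ofReal_div_of_pos (ENNReal.toReal_pos hE0 hE), ENNReal.ofReal_toReal hE]
  calc μ (Rᶜ ∩ E) / μ E = (μ E - μ R) / μ E := by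
        rw [inter_comm, ← sdiff_eq,
          measure_sdiff hRE hR.nullMeasurableSet (measure_ne_top_of_subset hRE hE)]
    _ ≤ (μ E - ENNReal.ofReal ε) / μ E := by gcongr
    _ = 1 - ENNReal.ofReal (ε / (μ E).toReal) := by
        rw [ENNReal.sub_div fun _ _ => hE0, ENNReal.div_self hE0 hE, hεE]
    _ ≤ ENNReal.ofReal (Real.exp (-ε / (μ E).toReal)) := by
        rw [neg_div]; exact ENNReal.one_sub_ofReal_le_ofReal_exp_neg _

lemma ProbabilityTheory.iIndepFun.measure_iInter_preimage_le_pow {Ω β ι : Type*}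
    [MeasurableSpace Ω] [MeasurableSpace β] [Fintype ι] {P : Measure Ω} {X : ι → Ω → β}
    (hX : iIndepFun X P) {S : Set β} (hS : MeasurableSet S) {q : ℝ≥0∞}
    (hq : ∀ i, P (X i ⁻¹' S) ≤ q) :
    P (⋂ i, X i ⁻¹' S) ≤ q ^ Fintype.card ι := by
  have hprod := hX.measure_inter_preimage_eq_mul Finset.univ (sets := fun _ => S) fun _ _ => hS
  simp only [Finset.mem_univ, iInter_true] at hprod
  rw [hprod, ← Finset.card_univ, ← Finset.prod_const]
  exact Finset.prod_le_prod' fun i _ => hq i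

lemma MeasureTheory.one_sub_card_mul_le_measure_forall_exists_mem {Ω β ι : Type*}
    [MeasurableSpace Ω] (P : Measure Ω) [IsProbabilityMeasure P] (X : ι → Ω → β)
    (𝓡 : Finset (Set β)) {b : ℝ≥0∞} (hmiss : ∀ R ∈ 𝓡, P (⋂ i, X i ⁻¹' Rᶜ) ≤ b) :
    1 - 𝓡.card * b ≤ P {ω | ∀ R ∈ 𝓡, ∃ i, X i ω ∈ R} := by
  set hit := {ω | ∀ R ∈ 𝓡, ∃ i, X i ω ∈ R}
  have hmiss_eq : hitᶜ = ⋃ R ∈ 𝓡, ⋂ i, X i ⁻¹' Rᶜ := by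
    ext ω; simp [hit]
  rw [tsub_le_iff_right, ← measure_univ (μ := P)]
  calc P univ ≤ P hit + P hitᶜ := measure_univ_le_add_compl _
    _ ≤ P hit + 𝓡.card * b := by
        gcongr
        rw [hmiss_eq, ← nsmul_eq_mul]
        exact (measure_biUnion_finset_le 𝓡 _).trans (Finset.sum_le_card_nsmul _ _ _ hmiss)

theorem almost_cover_prob_of_almost_partition_general {n : ℕ}
    (E : Set (EuclideanSpace ℝ (Fin n)))
    (hEbdd : Bornology.IsBounded E) (hEpos : 0 < volume E)
    (α : ℝ)
    (A : Set (EuclideanSpace ℝ (Fin n))) (hAE : A ⊆ E)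
    (hAvol : ENNReal.ofReal (1 - α) * volume E ≤ volume A)
    (ε δ : ℝ)
    (𝓡 : Finset (Set (EuclideanSpace ℝ (Fin n)))) (M : ℕ) (hM : 𝓡.card = M)
    (hmeas : ∀ R ∈ 𝓡, MeasurableSet R)
    (hcover : ⋃₀ (𝓡 : Set (Set (EuclideanSpace ℝ (Fin n)))) = A)
    (hvol : ∀ R ∈ 𝓡, ENNReal.ofReal ε ≤ volume R)
    (hdiam : ∀ R ∈ 𝓡, Metric.diam R ≤ δ)
    {Ω : Type*} [MeasurableSpace Ω] (P : Measure Ω) [IsProbabilityMeasure P]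
    (N : ℕ) (X : Fin N → Ω → EuclideanSpace ℝ (Fin n))
    (hindep : iIndepFun X P)
    (hunif : ∀ i, ∀ B : Set (EuclideanSpace ℝ (Fin n)), MeasurableSet B →
      P (X i ⁻¹' B) = volume (B ∩ E) / volume E) :
    1 - (M : ℝ≥0∞) * ENNReal.ofReal (Real.exp (-ε * N / (volume E).toReal)) ≤
      P {ω | ENNReal.ofReal (1 - α) * volume E ≤
        volume ((⋃ i, Metric.closedBall (X i ω) δ) ∩ E)} := by
  have hE : volume E ≠ ∞ := hEbdd.measure_lt_top.ne
  have hRE : ∀ R ∈ 𝓡, R ⊆ E := fun R hR => (subset_sUnion_of_mem hR).trans (hcover ▸ hAE)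
  have hmiss : ∀ R ∈ 𝓡, P (⋂ i, X i ⁻¹' Rᶜ) ≤
      ENNReal.ofReal (Real.exp (-ε * N / (volume E).toReal)) := by
    intro R hR
    have hRc := (hmeas R hR).compl
    calc P (⋂ i, X i ⁻¹' Rᶜ) ≤ ENNReal.ofReal (Real.exp (-ε / (volume E).toReal)) ^ N := by
          simpa using hindep.measure_iInter_preimage_le_pow hRc fun i => (hunif i _ hRc).trans_le
            (measure_compl_inter_div_le_exp (hmeas R hR) (hRE R hR) hEpos.ne' hE (hvol R hR))
      _ = ENNReal.ofReal (Real.exp (-ε * N / (volume E).toReal)) := by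
          rw [← ENNReal.ofReal_pow (Real.exp_nonneg _), ← Real.exp_nat_mul]
          ring_nf
  refine hM ▸ (one_sub_card_mul_le_measure_forall_exists_mem P X 𝓡 hmiss).trans
    (measure_mono fun ω hhit => hAvol.trans (measure_mono (subset_inter ?_ hAE)))
  exact hcover ▸ sUnion_subset_iUnion_closedBall_of_diam_le
    (fun R hR => hEbdd.subset (hRE R hR)) hdiam hhit

theorem almost_cover_prob_of_almost_partition {n : ℕ}
    (E : Set (EuclideanSpace ℝ (Fin n))) (hEopen : IsOpen E)
    (hEbdd : Bornology.IsBounded E) (hEpos : 0 < volume E)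
    (α : ℝ) (hα : α ∈ Set.Ioo (0 : ℝ) 1)
    (A : Set (EuclideanSpace ℝ (Fin n))) (hAmeas : MeasurableSet A) (hAE : A ⊆ E)
    (hAvol : ENNReal.ofReal (1 - α) * volume E ≤ volume A)
    (ε δ : ℝ) (hε : 0 < ε) (hδ : 0 < δ)
    (𝓡 : Finset (Set (EuclideanSpace ℝ (Fin n)))) (M : ℕ) (hM : 𝓡.card = M)
    (hmeas : ∀ R ∈ 𝓡, MeasurableSet R)
    (hdisj : ∀ R ∈ 𝓡, ∀ R' ∈ 𝓡, R ≠ R' → Disjoint R R')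
    (hcover : ⋃₀ (𝓡 : Set (Set (EuclideanSpace ℝ (Fin n)))) = A)
    (hvol : ∀ R ∈ 𝓡, ENNReal.ofReal ε ≤ volume R)
    (hdiam : ∀ R ∈ 𝓡, Metric.diam R ≤ δ)
    {Ω : Type*} [MeasurableSpace Ω] (P : Measure Ω) [IsProbabilityMeasure P]
    (N : ℕ) (X : Fin N → Ω → EuclideanSpace ℝ (Fin n))
    (hindep : iIndepFun X P)
    (hunif : ∀ i, ∀ B : Set (EuclideanSpace ℝ (Fin n)), MeasurableSet B →
      P (X i ⁻¹' B) = volume (B ∩ E) / volume E) :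
    1 - (M : ℝ≥0∞) * ENNReal.ofReal (Real.exp (-ε * N / (volume E).toReal)) ≤
      P {ω | ENNReal.ofReal (1 - α) * volume E ≤
        volume ((⋃ i, Metric.closedBall (X i ω) δ) ∩ E)} :=
  almost_cover_prob_of_almost_partition_general E hEbdd hEpos α A hAE hAvol ε δ 𝓡 M hM hmeas hcover
    hvol hdiam P N X hindep hunif
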